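/- arXiv:2111.05532 — 2 statements merged into one kernel-verified Lean document; each statement's English description precedes it below -/
import Mathlib

section
/- Let X = ∏_{α∈A} X_α be a product of nonempty compact metric spaces, P ⊆ X closed, and f : P → P a homeomorphism with f(P^{(κ)}) = P^{(κ)} for every cardinal κ. Let λ < μ be infinite cardinals with μ ≤ |A| such that P^{(β)} ∖ P^{(λ)} = ∅ for every cardinal β with λ ≤ β < μ, and suppose P ≠ P^{(λ)}. Suppose C ⊆ A is an f-admissible set of cardinality λ such that π_C^{-1}(P_C^{(λ)}) = P^{(λ)}, where P_C^{(λ)} = π_C(P^{(λ)}). Then there is an f-admissible set B ⊆ A of cardinality μ such that: (i) C ⊆ B and π_B^{-1}(P_B^{(μ)}) = P^{(μ)}, where P_B^{(μ)} = π_B(P^{(μ)}); (ii) every compact set F ⊆ P_B ∖ P_B^{(λ)} is μ-negligible in X_B, where P_B^{(λ)} = π_B(P^{(λ)}); (iii) for every x ∈ P_C ∖ P_C^{(λ)} the set π^B_{B∖C}((π^B_C)^{-1}(x) ∩ P_B) is μ-negligible in X_{B∖C}, where π^B_C : X_B → X_C and π^B_{B∖C} : X_B → X_{B∖C} are the projections;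 (iv) every α ∈ B is contained in a countable f-admissible set B(α) with B(α) ⊆ B. -/
universe u

open Set

set_option linter.unusedSectionVars false
set_option linter.unusedVariables false
set_option maxHeartbeats 1000000

/-- The projection of the product `∀ i, X i` onto the partial product indexed by `B`. -/
def proj {I : Type u} {X : I → Type u} (B : Set I) (x : ∀ i, X i) : ∀ b : B, X b :=
  fun b => x b

/-- The projection of a partial product indexed by `B` onto the one indexed by `C ⊆ B`. -/
def projRes {I : Type u} {X : I → Type u} {B C : Set I} (h : C ⊆ B) (y : ∀ b : B, X b) :
    ∀ c : C, X c := fun c => y ⟨c.1, h c.2⟩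

/-- The projection of a partial product indexed by `B` onto the one indexed by `B \ C`. -/
def projDiff {I : Type u} {X : I → Type u} {B C : Set I} (y : ∀ b : B, X b) :
    ∀ d : (B \ C : Set I), X d := fun d => y ⟨d.1, d.2.1⟩

/-- A set `B ⊆ I` is `f`-admissible for a homeomorphism `f : P ≃ₜ P` of a closed subset `P`
of the product `∀ i, X i` if there is a homeomorphism `f_B` of `P_B = π_B(P)` with
`π_B ∘ f = f_B ∘ π_B` on `P`. -/
def IsAdmissible {I : Type u} {X : I → Type u} [∀ i, TopologicalSpace (X i)]
    (P : Set (∀ i, X i)) (f : P ≃ₜ P) (B : Set I) : Prop :=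
  ∃ fB : (proj B '' P : Set (∀ b : B, X b)) ≃ₜ (proj B '' P : Set (∀ b : B, X b)),
    ∀ p : P, (fB ⟨proj B p.1, ⟨p.1, p.2, rfl⟩⟩).1 = proj B (f p).1

/-- The `λ`-interior of a set `P` in a topological space `Z`: for infinite `λ`, the set of
points `x ∈ P` that are contained in a `G_λ`-subset (an intersection of at most `λ` open sets)
of `Z` lying inside `P`; for finite `λ`, the ordinary interior of `P`. -/
def lamInterior {Z : Type u} [TopologicalSpace Z] (lam : Cardinal.{u}) (P : Set Z) : Set Z :=
  if lam < Cardinal.aleph0 then interior P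
  else {x | x ∈ P ∧ ∃ K : Set Z,
    (∃ S : Set (Set Z), (∀ U ∈ S, IsOpen U) ∧ Cardinal.mk S ≤ lam ∧ K = ⋂₀ S) ∧ x ∈ K ∧ K ⊆ P}

/-- A set `Q` is `μ`-negligible in `Z` if its `λ`-interior is empty for every `λ < μ`. -/
def IsNegligible {Z : Type u} [TopologicalSpace Z] (μ : Cardinal.{u}) (Q : Set Z) : Prop :=
  ∀ lam < μ, lamInterior lam Q = ∅

/-- The image of a subset `S` of the ambient space under a homeomorphism `f : P ≃ₜ K`
between subspaces, i.e. `f(S ∩ P)` viewed in the ambient space of `K`. -/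
def imageOn {Z W : Type u} [TopologicalSpace Z] [TopologicalSpace W] {P : Set Z} {K : Set W}
    (f : P ≃ₜ K) (S : Set Z) : Set W :=
  Subtype.val '' (⇑f '' (Subtype.val ⁻¹' S))




section Prelim
variable {Z : Type u} [TopologicalSpace Z]

lemma lamInterior_subset (κ : Cardinal.{u}) (P : Set Z) : lamInterior κ P ⊆ P := by
  unfold lamInterior
  split
  · exact interior_subset
  · exact fun x hx => hx.1

lemma mem_lamInterior_of_opens {κ : Cardinal.{u}} (hκ : Cardinal.aleph0 ≤ κ) {P : Set Z}
    {S : Set (Set Z)} (hop : ∀ U ∈ S, IsOpen U) (hmk : Cardinal.mk S ≤ κ)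
    {x : Z} (hx : x ∈ ⋂₀ S) (hsub : ⋂₀ S ⊆ P) : x ∈ lamInterior κ P := by
  unfold lamInterior
  rw [if_neg (not_lt.2 hκ)]
  exact ⟨hsub hx, ⋂₀ S, ⟨S, hop, hmk, rfl⟩, hx, hsub⟩

lemma lamInterior_mono_card {κ₁ κ₂ : Cardinal.{u}} (h : κ₁ ≤ κ₂) (P : Set Z) :
    lamInterior κ₁ P ⊆ lamInterior κ₂ P := by
  rcases lt_or_ge κ₂ Cardinal.aleph0 with h2 | h2
  · have h1 : κ₁ < Cardinal.aleph0 := lt_of_le_of_lt h h2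
    unfold lamInterior; rw [if_pos h1, if_pos h2]
  · rcases lt_or_ge κ₁ Cardinal.aleph0 with h1 | h1
    · intro x hx
      unfold lamInterior at hx
      rw [if_pos h1] at hx
      refine mem_lamInterior_of_opens h2 (S := {interior P}) ?_ ?_ ?_ ?_
      · rintro U rfl; exact isOpen_interior
      · simpa using le_trans Cardinal.one_le_aleph0 h2
      · simpa using hx
      · simp [interior_subset]
    · intro x hx
      unfold lamInterior at hx ⊢
      rw [if_neg (not_lt.2 h1)] at hx
      rw [if_neg (not_lt.2 (le_trans h1 h))]
      obtain ⟨hxP, K, ⟨S, hop, hmk, rfl⟩, hxK, hKP⟩ := hx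
      exact ⟨hxP, ⋂₀ S, ⟨S, hop, le_trans hmk h, rfl⟩, hxK, hKP⟩

lemma lamInterior_empty_of_subset {κ : Cardinal.{u}} {Q Q' : Set Z} (h : Q ⊆ Q')
    (h' : lamInterior κ Q' = ∅) : lamInterior κ Q = ∅ := by
  rw [← subset_empty_iff, ← h']
  unfold lamInterior
  split
  · exact interior_mono h
  · rintro x ⟨hx, K, hK, hxK, hKQ⟩
    exact ⟨h hx, K, hK, hxK, hKQ.trans h⟩

end Prelim

section Agree
variable {J : Type u} {Y : J → Type u}

/-- agreement cylinder -/
def agree (D : Set J) (x : ∀ j, Y j) : Set (∀ j, Y j) := {y | ∀ j ∈ D, y j = x j}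

lemma self_mem_agree {D : Set J} {x : ∀ j, Y j} : x ∈ agree D x := fun _ _ => rfl

lemma agree_mono {D D' : Set J} (h : D ⊆ D') (x : ∀ j, Y j) : agree D' x ⊆ agree D x :=
  fun _ hy j hj => hy j (h hj)

variable [∀ j, MetricSpace (Y j)]

lemma agree_eq_sInter (D : Set J) (x : ∀ j, Y j) :
    ∃ S : Set (Set (∀ j, Y j)), (∀ U ∈ S, IsOpen U) ∧
      Cardinal.mk S ≤ max (Cardinal.mk D) Cardinal.aleph0 ∧ agree D x = ⋂₀ S := by
  classical
  refine ⟨(fun p : D × ℕ => {y : ∀ j, Y j | dist (y p.1.1) (x p.1.1) < 1 / (p.2 + 1)}) '' univ,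
    ?_, ?_, ?_⟩
  · rintro U ⟨⟨⟨j, hj⟩, n⟩, -, rfl⟩
    exact isOpen_lt (Continuous.dist (continuous_apply j) continuous_const) continuous_const
  · calc Cardinal.mk _ ≤ Cardinal.mk (D × ℕ) := Cardinal.mk_image_le.trans (by simp)
      _ = Cardinal.mk D * Cardinal.aleph0 := by simp [Cardinal.mk_prod]
      _ ≤ max (Cardinal.mk D) Cardinal.aleph0 * max (Cardinal.mk D) Cardinal.aleph0 :=
        mul_le_mul' (le_max_left _ _) (le_max_right _ _)
      _ = max (Cardinal.mk D) Cardinal.aleph0 :=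
        Cardinal.mul_eq_self (le_max_right _ _)
  · ext y
    simp only [mem_sInter, mem_image, agree, mem_setOf_eq]
    constructor
    · rintro h U ⟨⟨⟨j, hj⟩, n⟩, -, rfl⟩
      simp only [mem_setOf_eq, h j hj, dist_self]
      positivity
    · intro h j hj
      have : ∀ n : ℕ, dist (y j) (x j) < 1 / (n + 1) := fun n =>
        h _ ⟨⟨⟨j, hj⟩, n⟩, mem_univ _, rfl⟩
      have hd : dist (y j) (x j) ≤ 0 := by
        by_contra hc
        push_neg at hc
        obtain ⟨n, hn⟩ := exists_nat_one_div_lt hc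
        exact absurd (this n) (by push_neg; exact le_of_lt hn)
      exact dist_le_zero.1 hd

lemma mem_lamInterior_of_agree {κ : Cardinal.{u}} (hκ : Cardinal.aleph0 ≤ κ)
    {P : Set (∀ j, Y j)} {D : Set J} (hD : Cardinal.mk D ≤ κ) {x : ∀ j, Y j}
    (hsub : agree D x ⊆ P) : x ∈ lamInterior κ P := by
  obtain ⟨S, hop, hmk, hS⟩ := agree_eq_sInter D x
  refine mem_lamInterior_of_opens hκ hop (hmk.trans (max_le hD hκ)) ?_ ?_
  · rw [← hS]; exact self_mem_agree
  · rw [← hS]; exact hsub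

/-- The key reduction: a point of the `β`-interior of `Q` admits a small agreement
cylinder inside `Q`. -/
lemma agree_of_mem_lamInterior {β : Cardinal.{u}} {Q : Set (∀ j, Y j)} {x : ∀ j, Y j}
    (hx : x ∈ lamInterior β Q) :
    ∃ D : Set J, Cardinal.mk D ≤ max β Cardinal.aleph0 ∧ agree D x ⊆ Q := by
  classical
  unfold lamInterior at hx
  split_ifs at hx with hβ
  · obtain ⟨F, u, hu, hsub⟩ := isOpen_pi_iff.1 isOpen_interior x hx
    refine ⟨↑F, ?_, ?_⟩
    · exact le_trans (le_of_lt (Cardinal.lt_aleph0_of_finite _)) (le_max_right _ _)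
    · intro y hy
      refine interior_subset (hsub fun a ha => ?_)
      rw [hy a ha]; exact (hu a ha).2
  · obtain ⟨hxQ, K, ⟨S, hop, hmk, rfl⟩, hxK, hKQ⟩ := hx
    choose F u hu hsub using fun U : S => isOpen_pi_iff.1 (hop U.1 U.2) x (hxK U.1 U.2)
    refine ⟨⋃ U : S, ↑(F U), ?_, ?_⟩
    · calc Cardinal.mk ↥(⋃ U : S, (↑(F U) : Set J))
          ≤ Cardinal.mk S * Cardinal.aleph0 := by
            refine (Cardinal.mk_iUnion_le _).trans ?_
            refine mul_le_mul' le_rfl ?_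
            exact ciSup_le' fun U => le_of_lt (Cardinal.lt_aleph0_of_finite _)
        _ ≤ max β Cardinal.aleph0 * max β Cardinal.aleph0 :=
            mul_le_mul' (hmk.trans (le_max_left _ _)) (le_max_right _ _)
        _ = max β Cardinal.aleph0 := Cardinal.mul_eq_self (le_max_right _ _)
    · intro y hy
      refine hKQ (fun U hU => hsub ⟨U, hU⟩ fun a ha => ?_)
      have : y a = x a := hy a (mem_iUnion.2 ⟨⟨U, hU⟩, ha⟩)
      rw [this]; exact (hu ⟨U, hU⟩ a ha).2

end Agree



section Adm
variable {I : Type u} {X : I → Type u} [∀ i, MetricSpace (X i)]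
  [∀ i, CompactSpace (X i)] [∀ i, Nonempty (X i)]
  (P : Set (∀ i, X i)) (f : P ≃ₜ P)

/-- `B` factors both `f` and `f.symm`. -/
def Good (B : Set I) : Prop :=
  (∀ p q : P, (∀ i ∈ B, p.1 i = q.1 i) → ∀ i ∈ B, (f p).1 i = (f q).1 i) ∧
  (∀ p q : P, (∀ i ∈ B, p.1 i = q.1 i) → ∀ i ∈ B, (f.symm p).1 i = (f.symm q).1 i)

lemma good_iUnion {ι : Type*} {A : ι → Set I} (h : ∀ t, Good P f (A t)) :
    Good P f (⋃ t, A t) := by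
  constructor
  · intro p q hpq i hi
    obtain ⟨t, ht⟩ := mem_iUnion.1 hi
    exact (h t).1 p q (fun j hj => hpq j (mem_iUnion.2 ⟨t, hj⟩)) i ht
  · intro p q hpq i hi
    obtain ⟨t, ht⟩ := mem_iUnion.1 hi
    exact (h t).2 p q (fun j hj => hpq j (mem_iUnion.2 ⟨t, hj⟩)) i ht

lemma continuous_proj (B : Set I) : Continuous (proj (X := X) B) :=
  continuous_pi fun b => continuous_apply b.1

variable {P f} (hP : IsClosed P)

include hP in
lemma isAdmissible_of_good {B : Set I} (hB : Good P f B) : IsAdmissible P f B := by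
  classical
  have hPc : IsCompact P := hP.isCompact
  haveI : CompactSpace P := isCompact_iff_compactSpace.1 hPc
  set PB : Set (∀ b : B, X b) := proj B '' P with hPB
  let π : P → PB := fun p => ⟨proj B p.1, ⟨p.1, p.2, rfl⟩⟩
  have hπc : Continuous π :=
    Continuous.subtype_mk ((continuous_proj B).comp continuous_subtype_val) _
  have hπs : Function.Surjective π := by
    rintro ⟨y, x, hx, rfl⟩
    exact ⟨⟨x, hx⟩, rfl⟩
  have hπcl : IsClosedMap π := hπc.isClosedMap
  -- the two induced maps
  have key : ∀ (g : P → P), Continuous g →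
      (∀ p q : P, (∀ i ∈ B, p.1 i = q.1 i) → ∀ i ∈ B, (g p).1 i = (g q).1 i) →
      ∃ G : PB → PB, Continuous G ∧ ∀ p : P, G (π p) = π (g p) := by
    intro g hg hfact
    have hwd : ∀ p q : P, π p = π q → π (g p) = π (g q) := by
      intro p q hpq
      have h1 : ∀ i ∈ B, p.1 i = q.1 i := by
        intro i hi
        exact congrFun (congrArg Subtype.val hpq) ⟨i, hi⟩
      apply Subtype.ext
      funext b
      exact hfact p q h1 b.1 b.2
    let lift : PB → P := fun y => (hπs y).choose
    have hlift : ∀ y, π (lift y) = y := fun y => (hπs y).choose_spec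
    refine ⟨fun y => π (g (lift y)), ?_, ?_⟩
    · rw [continuous_iff_isClosed]
      intro S hS
      have himg : (fun y => π (g (lift y))) ⁻¹' S = π '' ((π ∘ g) ⁻¹' S) := by
        ext y
        constructor
        · intro hy
          exact ⟨lift y, by simpa using hy, hlift y⟩
        · rintro ⟨p, hp, rfl⟩
          have : π (g (lift (π p))) = π (g p) := hwd _ _ (hlift (π p))
          simpa [this] using hp
      rw [himg]
      exact hπcl _ (hS.preimage (hπc.comp hg))
    · intro p
      exact hwd _ _ (hlift (π p))
  obtain ⟨F, hFc, hF⟩ := key f f.continuous hB.1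
  obtain ⟨G, hGc, hG⟩ := key f.symm f.symm.continuous hB.2
  have hGF : ∀ y, G (F y) = y := by
    intro y
    obtain ⟨p, rfl⟩ := hπs y
    rw [hF, hG]
    simp
  have hFG : ∀ y, F (G y) = y := by
    intro y
    obtain ⟨p, rfl⟩ := hπs y
    rw [hG, hF]
    simp
  refine ⟨⟨⟨F, G, hGF, hFG⟩, hFc, hGc⟩, ?_⟩
  intro p
  have : F (π p) = π (f p) := hF p
  simpa using congrArg Subtype.val this

include hP in
lemma osc_step {M : Type u} [MetricSpace M] (g : P → M) (hg : Continuous g)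
    {ε : ℝ} (hε : 0 < ε) :
    ∃ F : Finset I, ∀ p q : P, (∀ j ∈ F, p.1 j = q.1 j) → dist (g p) (g q) < ε := by
  classical
  have hPc : IsCompact P := hP.isCompact
  have hcov : ∀ x : P, ∃ (Fx : Finset I) (u : ∀ i, Set (X i)),
      (∀ a ∈ Fx, IsOpen (u a) ∧ x.1 a ∈ u a) ∧
      (∀ q : P, (∀ a ∈ Fx, q.1 a ∈ u a) → dist (g q) (g x) < ε / 2) := by
    intro x
    have hcont : Continuous fun q : P => dist (g q) (g x) :=
      (hg.dist continuous_const)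
    have hopen : IsOpen {q : P | dist (g q) (g x) < ε / 2} :=
      isOpen_lt hcont continuous_const
    obtain ⟨U, hU, hUeq⟩ := isOpen_induced_iff.1 hopen
    have hxU : x.1 ∈ U := by
      have : x ∈ {q : P | dist (g q) (g x) < ε / 2} := by simp [dist_self]; positivity
      rw [← hUeq] at this
      exact this
    obtain ⟨Fx, u, hu, hsub⟩ := isOpen_pi_iff.1 hU x.1 hxU
    refine ⟨Fx, u, fun a ha => ⟨(hu a ha).1, (hu a ha).2⟩, ?_⟩
    intro q hq
    have : q.1 ∈ U := hsub fun a ha => hq a ha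
    have : q ∈ Subtype.val ⁻¹' U := this
    rw [hUeq] at this
    exact this
  choose Fx u hu hballs using hcov
  have hcover : P ⊆ ⋃ x : P, (↑(Fx x) : Set I).pi (u x) := by
    intro z hz
    exact mem_iUnion.2 ⟨⟨z, hz⟩, fun a ha => (hu ⟨z, hz⟩ a ha).2⟩
  obtain ⟨T, hT⟩ := hPc.elim_finite_subcover (fun x : P => (↑(Fx x) : Set I).pi (u x))
    (fun x => isOpen_set_pi (Finset.finite_toSet _) fun a ha => (hu x a ha).1) hcover
  refine ⟨T.biUnion Fx, ?_⟩
  intro p q hpq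
  obtain ⟨x, hxT, hpx⟩ : ∃ x ∈ T, p.1 ∈ (↑(Fx x) : Set I).pi (u x) := by
    have := hT p.2
    simpa using this
  have hqx : q.1 ∈ (↑(Fx x) : Set I).pi (u x) := by
    intro a ha
    have : q.1 a = p.1 a := (hpq a (Finset.mem_biUnion.2 ⟨x, hxT, ha⟩)).symm
    rw [this]
    exact hpx a ha
  have h1 : dist (g p) (g x) < ε / 2 := hballs x p fun a ha => hpx a ha
  have h2 : dist (g q) (g x) < ε / 2 := hballs x q fun a ha => hqx a ha
  calc dist (g p) (g q) ≤ dist (g p) (g x) + dist (g x) (g q) := dist_triangle _ _ _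
    _ < ε / 2 + ε / 2 := by rw [dist_comm (g x) (g q)]; exact add_lt_add h1 h2
    _ = ε := by ring

include hP in
lemma exists_countable_good (D : Set I) (hD : D.Countable) :
    ∃ D' : Set I, D ⊆ D' ∧ D'.Countable ∧ Good P f D' := by
  classical
  have hstepf : ∀ (i : I) (n : ℕ), ∃ F : Finset I,
      ∀ p q : P, (∀ j ∈ F, p.1 j = q.1 j) →
        dist ((f p).1 i) ((f q).1 i) < 1 / (n + 1) := by
    intro i n
    refine osc_step hP (fun p => (f p).1 i)
      ((continuous_apply i).comp (continuous_subtype_val.comp f.continuous)) ?_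
    positivity
  have hsteps : ∀ (i : I) (n : ℕ), ∃ F : Finset I,
      ∀ p q : P, (∀ j ∈ F, p.1 j = q.1 j) →
        dist ((f.symm p).1 i) ((f.symm q).1 i) < 1 / (n + 1) := by
    intro i n
    refine osc_step hP (fun p => (f.symm p).1 i)
      ((continuous_apply i).comp (continuous_subtype_val.comp f.symm.continuous)) ?_
    positivity
  choose Ff hFf using hstepf
  choose Fs hFs using hsteps
  let step : Set I → Set I := fun E => E ∪ ⋃ (i ∈ E) (n : ℕ), (↑(Ff i n) ∪ ↑(Fs i n) : Set I)
  have hstep_sub : ∀ E, E ⊆ step E := fun E => subset_union_left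
  have hstep_count : ∀ E : Set I, E.Countable → (step E).Countable := by
    intro E hE
    refine hE.union ?_
    refine Countable.biUnion hE fun i _ => ?_
    exact countable_iUnion fun n => ((Ff i n).countable_toSet).union ((Fs i n).countable_toSet)
  refine ⟨⋃ n, step^[n] D, ?_, ?_, ?_⟩
  · intro x hx
    exact mem_iUnion.2 ⟨0, by simpa using hx⟩
  · exact countable_iUnion fun n => by
      induction n with
      | zero => simpa using hD
      | succ k ih => rw [Function.iterate_succ_apply']; exact hstep_count _ ih
  · have hmem : ∀ (n : ℕ) (i : I), i ∈ step^[n] D →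
        (↑(Ff i 0) : Set I) ⊆ ⋃ m, step^[m] D ∧ ∀ k : ℕ,
        (↑(Ff i k) : Set I) ⊆ ⋃ m, step^[m] D ∧ (↑(Fs i k) : Set I) ⊆ ⋃ m, step^[m] D := by
      intro n i hi
      have hsub : ∀ k : ℕ, (↑(Ff i k) ∪ ↑(Fs i k) : Set I) ⊆ step^[n+1] D := by
        intro k
        rw [Function.iterate_succ_apply']
        intro j hj
        refine subset_union_right ?_
        exact mem_iUnion.2 ⟨i, mem_iUnion.2 ⟨hi, mem_iUnion.2 ⟨k, hj⟩⟩⟩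
      refine ⟨?_, fun k => ⟨?_, ?_⟩⟩
      · exact fun j hj => mem_iUnion.2 ⟨n + 1, hsub 0 (Or.inl hj)⟩
      · exact fun j hj => mem_iUnion.2 ⟨n + 1, hsub k (Or.inl hj)⟩
      · exact fun j hj => mem_iUnion.2 ⟨n + 1, hsub k (Or.inr hj)⟩
    constructor
    · intro p q hpq i hi
      obtain ⟨n, hn⟩ := mem_iUnion.1 hi
      have : ∀ k : ℕ, dist ((f p).1 i) ((f q).1 i) < 1 / (k + 1) := by
        intro k
        refine hFf i k p q fun j hj => hpq j ?_
        exact ((hmem n i hn).2 k).1 hj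
      have hle : dist ((f p).1 i) ((f q).1 i) ≤ 0 := by
        by_contra hc
        push_neg at hc
        obtain ⟨k, hk⟩ := exists_nat_one_div_lt hc
        exact absurd (this k) (by push_neg; exact le_of_lt hk)
      exact dist_le_zero.1 hle
    · intro p q hpq i hi
      obtain ⟨n, hn⟩ := mem_iUnion.1 hi
      have : ∀ k : ℕ, dist ((f.symm p).1 i) ((f.symm q).1 i) < 1 / (k + 1) := by
        intro k
        refine hFs i k p q fun j hj => hpq j ?_
        exact ((hmem n i hn).2 k).2 hj
      have hle : dist ((f.symm p).1 i) ((f.symm q).1 i) ≤ 0 := by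
        by_contra hc
        push_neg at hc
        obtain ⟨k, hk⟩ := exists_nat_one_div_lt hc
        exact absurd (this k) (by push_neg; exact le_of_lt hk)
      exact dist_le_zero.1 hle

end Adm


section Boxes
variable {I : Type u} {X : I → Type u} [∀ i, MetricSpace (X i)]
  [∀ i, CompactSpace (X i)] [∀ i, Nonempty (X i)]

lemma exists_basis_enum :
    ∃ e : ∀ i : I, ℕ → Set (X i), (∀ i n, IsOpen (e i n)) ∧
      ∀ (i : I) (U : Set (X i)) (x : X i), IsOpen U → x ∈ U →
        ∃ n, x ∈ e i n ∧ e i n ⊆ U := by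
  classical
  have h : ∀ i : I, ∃ ei : ℕ → Set (X i), (∀ n, IsOpen (ei n)) ∧
      ∀ (U : Set (X i)) (x : X i), IsOpen U → x ∈ U → ∃ n, x ∈ ei n ∧ ei n ⊆ U := by
    intro i
    obtain ⟨b, hbc, -, hbb⟩ := TopologicalSpace.exists_countable_basis (X i)
    have hne : (insert ∅ b : Set (Set (X i))).Nonempty := ⟨∅, mem_insert _ _⟩
    obtain ⟨g, hg⟩ := (hbc.insert ∅).exists_eq_range hne
    refine ⟨g, ?_, ?_⟩
    · intro n
      have : g n ∈ insert ∅ b := by rw [hg]; exact mem_range_self n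
      rcases this with h | h
      · rw [h]; exact isOpen_empty
      · exact hbb.isOpen h
    · intro U x hU hx
      obtain ⟨v, hvb, hxv, hvU⟩ := hbb.exists_subset_of_mem_open hx hU
      have : v ∈ range g := by rw [← hg]; exact mem_insert_of_mem _ hvb
      obtain ⟨n, rfl⟩ := this
      exact ⟨n, hxv, hvU⟩
  choose e h1 h2 using h
  exact ⟨e, h1, h2⟩

variable (e : ∀ i : I, ℕ → Set (X i))

/-- the open box coded by a finite set of pairs -/
def box (G : Finset (I × ℕ)) : Set (∀ i, X i) := {x | ∀ p ∈ G, x p.1 ∈ e p.1 p.2}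

lemma isOpen_box (he : ∀ i n, IsOpen (e i n)) (G : Finset (I × ℕ)) : IsOpen (box e G) := by
  have : box e G = ⋂ p ∈ G, (fun x : ∀ i, X i => x p.1) ⁻¹' (e p.1 p.2) := by
    ext x; simp [box]
  rw [this]
  exact isOpen_biInter_finset fun p _ => (he p.1 p.2).preimage (continuous_apply p.1)

/-- support of a box code -/
noncomputable def boxSupp {X : I → Type u} (G : Finset (I × ℕ)) : Finset I := by
  classical
  exact G.image Prod.fst

lemma exists_box_of_notMem
    (hbas : ∀ (i : I) (U : Set (X i)) (x : X i), IsOpen U → x ∈ U → ∃ n, x ∈ e i n ∧ e i n ⊆ U)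
    {P : Set (∀ i, X i)} (hP : IsClosed P) {z : ∀ i, X i} (hz : z ∉ P) :
    ∃ G : Finset (I × ℕ), z ∈ box e G ∧ box e G ∩ P = ∅ := by
  classical
  obtain ⟨F, u, hu, hsub⟩ := isOpen_pi_iff.1 hP.isOpen_compl z hz
  have hn : ∀ a : F, ∃ n, z a.1 ∈ e a.1 n ∧ e a.1 n ⊆ u a.1 := fun a =>
    hbas a.1 (u a.1) (z a.1) (hu a.1 a.2).1 (hu a.1 a.2).2
  choose n hn1 hn2 using hn
  refine ⟨F.attach.image fun a => (a.1, n a), ?_, ?_⟩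
  · intro p hp
    obtain ⟨a, -, rfl⟩ := Finset.mem_image.1 hp
    exact hn1 a
  · rw [eq_empty_iff_forall_notMem]
    rintro x ⟨hx1, hx2⟩
    refine hsub (fun a ha => ?_) hx2
    have : x a ∈ e a (n ⟨a, ha⟩) := hx1 _ (Finset.mem_image.2 ⟨⟨a, ha⟩, Finset.mem_attach _ _, rfl⟩)
    exact hn2 ⟨a, ha⟩ this

lemma mk_finset_le (α : Type u) : Cardinal.mk (Finset α) ≤ max (Cardinal.mk α) Cardinal.aleph0 := by
  rcases finite_or_infinite α with h | h
  · haveI := Fintype.ofFinite α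
    have : Cardinal.mk (Finset α) < Cardinal.aleph0 := Cardinal.lt_aleph0_of_finite _
    exact le_trans (le_of_lt this) (le_max_right _ _)
  · rw [Cardinal.mk_finset_of_infinite]
    exact le_max_left _ _

/-- codes supported in `V` -/
def CodeSet {X : I → Type u} (V : Set I) : Set (Finset (I × ℕ)) := {G | ∀ p ∈ G, p.1 ∈ V}

lemma mk_codeSet_le (V : Set I) :
    Cardinal.mk (CodeSet (X := X) V) ≤ max (Cardinal.mk V) Cardinal.aleph0 := by
  classical
  have hinj : Function.Injective
      (fun G : CodeSet (X := X) V => (G.1.subtype fun p : I × ℕ => p.1 ∈ V)) := by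
    rintro ⟨G, hG⟩ ⟨G', hG'⟩ h
    simp only at h
    apply Subtype.ext
    simp only
    have h1 : (G.subtype fun p : I × ℕ => p.1 ∈ V).map (Function.Embedding.subtype _) =
        (G'.subtype fun p : I × ℕ => p.1 ∈ V).map (Function.Embedding.subtype _) := by rw [h]
    rwa [Finset.subtype_map, Finset.subtype_map, Finset.filter_true_of_mem hG,
      Finset.filter_true_of_mem hG'] at h1
  calc Cardinal.mk (CodeSet (X := X) V) ≤ Cardinal.mk (Finset {p : I × ℕ // p.1 ∈ V}) :=
        Cardinal.mk_le_of_injective hinj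
    _ ≤ max (Cardinal.mk {p : I × ℕ // p.1 ∈ V}) Cardinal.aleph0 := mk_finset_le _
    _ ≤ max (max (Cardinal.mk V) Cardinal.aleph0) Cardinal.aleph0 := by
        refine max_le_max ?_ le_rfl
        have : Cardinal.mk {p : I × ℕ // p.1 ∈ V} = Cardinal.mk (↥V × ℕ) := by
          refine Cardinal.mk_congr ⟨fun p => (⟨p.1.1, p.2⟩, p.1.2), fun q => ⟨(q.1.1, q.2), q.1.2⟩,
            fun p => rfl, fun q => rfl⟩
        rw [this, Cardinal.mk_prod]
        simp only [Cardinal.lift_id, Cardinal.mk_nat, Cardinal.lift_aleph0,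
          Cardinal.lift_uzero]
        calc Cardinal.mk V * Cardinal.aleph0
            ≤ max (Cardinal.mk V) Cardinal.aleph0 * max (Cardinal.mk V) Cardinal.aleph0 :=
              mul_le_mul' (le_max_left _ _) (le_max_right _ _)
          _ = max (Cardinal.mk V) Cardinal.aleph0 := Cardinal.mul_eq_self (le_max_right _ _)
    _ = max (Cardinal.mk V) Cardinal.aleph0 := by rw [max_assoc, max_self]



end Boxes


section Tower
variable {I : Type u} {X : I → Type u} [∀ i, MetricSpace (X i)]
  [∀ i, CompactSpace (X i)] [∀ i, Nonempty (X i)]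
  {P : Set (∀ i, X i)} (hP : IsClosed P)
  {lam μ : Cardinal.{u}} (hlam : Cardinal.aleph0 ≤ lam) (hlamμ : lam < μ)
  (hgap : ∀ β : Cardinal.{u}, lam ≤ β → β < μ →
    lamInterior β P \ lamInterior lam P = ∅)

include hlam hlamμ hgap in
/-- exit lemma : from any point of `P \ P^λ` one can leave `P` while staying on a
small agreement cylinder. -/
lemma exit_lemma {p : ∀ i, X i} (hp : p ∈ P \ lamInterior lam P)
    (V : Set I) (hV : Cardinal.mk V < μ) :
    ∃ z, z ∉ P ∧ ∀ i ∈ V, z i = p i := by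
  by_contra hcon
  push_neg at hcon
  have hsub : agree V p ⊆ P := by
    intro z hz
    by_contra hzP
    obtain ⟨i, hi, hne⟩ := hcon z hzP
    exact hne (hz i hi)
  set κ := max lam (Cardinal.mk V) with hκ
  have h1 : p ∈ lamInterior κ P :=
    mem_lamInterior_of_agree (le_trans hlam (le_max_left _ _)) (le_max_right _ _) hsub
  have h2 : lamInterior κ P \ lamInterior lam P = ∅ :=
    hgap κ (le_max_left _ _) (max_lt hlamμ hV)
  have : p ∈ lamInterior lam P := by
    by_contra hne
    exact absurd h2 (Nonempty.ne_empty ⟨p, h1, hne⟩)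
  exact hp.2 this

include hP hlam hlamμ hgap in
/-- The witness tower: a set `Vbig` of size at most `μ` of coordinates carrying,
for every `p ∈ P \ P^λ` and every small set `D`, a `P`-avoiding box aligned
with `p` on `D`. -/
lemma exists_witness_support (e : ∀ i : I, ℕ → Set (X i))
    (hbas : ∀ (i : I) (U : Set (X i)) (x : X i), IsOpen U → x ∈ U → ∃ n, x ∈ e i n ∧ e i n ⊆ U)
    (hμ : Cardinal.aleph0 ≤ μ) :
    ∃ Vbig : Set I, Cardinal.mk Vbig ≤ μ ∧
      ∀ p ∈ P \ lamInterior lam P, ∀ D : Set I, Cardinal.mk D < μ →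
        ∃ G : Finset (I × ℕ), (↑(boxSupp (X := X) G) : Set I) ⊆ Vbig ∧ box e G ∩ P = ∅ ∧
          (∃ w, w ∈ box e G) ∧
          ∀ pr ∈ G, pr.1 ∈ D → p pr.1 ∈ e pr.1 pr.2 := by
  classical
  -- the "one step" operator
  let picked : Set I → Finset (I × ℕ) → Finset (I × ℕ) := fun V d =>
    if h : ∃ G : Finset (I × ℕ), (box e G ∩ P = ∅ ∧ (∃ w, w ∈ box e G)) ∧
        G.filter (fun pr => pr.1 ∈ V) = d
    then h.choose else ∅
  have hpicked : ∀ (V : Set I) (d : Finset (I × ℕ)),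
      (∃ G : Finset (I × ℕ), (box e G ∩ P = ∅ ∧ (∃ w, w ∈ box e G)) ∧
        G.filter (fun pr => pr.1 ∈ V) = d) →
      (box e (picked V d) ∩ P = ∅ ∧ (∃ w, w ∈ box e (picked V d))) ∧
        (picked V d).filter (fun pr => pr.1 ∈ V) = d := by
    intro V d h
    simp only [picked, dif_pos h]
    exact h.choose_spec
  let NEXT : Set I → Set I := fun V =>
    V ∪ ⋃ d : CodeSet (X := X) V, (↑(boxSupp (X := X) (picked V d.1)) : Set I)
  have hNEXT_sub : ∀ V, V ⊆ NEXT V := fun V => subset_union_left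
  have hNEXT_mk : ∀ V : Set I, Cardinal.mk (NEXT V) ≤ max (Cardinal.mk V) Cardinal.aleph0 := by
    intro V
    have h1 : Cardinal.mk (⋃ d : CodeSet (X := X) V,
        (↑(boxSupp (X := X) (picked V d.1)) : Set I)) ≤ max (Cardinal.mk V) Cardinal.aleph0 := by
      calc Cardinal.mk _ ≤ Cardinal.sum fun d : CodeSet (X := X) V =>
            Cardinal.mk (↑(boxSupp (X := X) (picked V d.1)) : Set I) :=
          Cardinal.mk_iUnion_le_sum_mk
        _ ≤ Cardinal.sum fun _ : CodeSet (X := X) V => Cardinal.aleph0 :=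
          Cardinal.sum_le_sum _ _ fun d =>
            le_of_lt (Cardinal.lt_aleph0_of_finite _)
        _ = Cardinal.mk (CodeSet (X := X) V) * Cardinal.aleph0 := Cardinal.sum_const' _ _
        _ ≤ max (Cardinal.mk V) Cardinal.aleph0 * max (Cardinal.mk V) Cardinal.aleph0 :=
          mul_le_mul' (mk_codeSet_le _) (le_max_right _ _)
        _ = max (Cardinal.mk V) Cardinal.aleph0 := Cardinal.mul_eq_self (le_max_right _ _)
    calc Cardinal.mk (NEXT V) ≤ Cardinal.mk V + _ := Cardinal.mk_union_le _ _
      _ ≤ max (Cardinal.mk V) Cardinal.aleph0 + max (Cardinal.mk V) Cardinal.aleph0 :=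
          add_le_add (le_max_left _ _) h1
      _ = max (Cardinal.mk V) Cardinal.aleph0 := Cardinal.add_eq_self (le_max_right _ _)
  -- the tower
  let Vt : μ.ord.ToType → Set I := (IsWellFounded.wf (α := μ.ord.ToType) (r := (· < ·))).fix
    (fun j ih => ⋃ j' : {x // x < j}, NEXT (ih j'.1 j'.2))
  have hVt_eq : ∀ j : μ.ord.ToType, Vt j = ⋃ j' : {x // x < j}, NEXT (Vt j'.1) := fun j =>
    WellFounded.fix_eq _ _ j
  have hVt_next : ∀ j j' : μ.ord.ToType, j' < j → NEXT (Vt j') ⊆ Vt j := by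
    intro j j' hj
    rw [hVt_eq j]
    exact subset_iUnion_of_subset ⟨j', hj⟩ (le_refl _)
  have hVt_mono : ∀ j j' : μ.ord.ToType, j' < j → Vt j' ⊆ Vt j := fun j j' hj =>
    (hNEXT_sub _).trans (hVt_next j j' hj)
  -- cardinality bound
  have hVt_mk : ∀ j : μ.ord.ToType, Cardinal.mk (Vt j) ≤
      lam + (@Ordinal.typein μ.ord.ToType (· < ·) isWellOrder_lt j).card := by
    intro j
    induction j using ((IsWellFounded.wf (α := μ.ord.ToType) (r := (· < ·)))).induction with
    | _ j ih =>
      rw [hVt_eq j]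
      have hcard : ∀ j' : {x // x < j},
          Cardinal.mk (NEXT (Vt j'.1)) ≤ lam + (@Ordinal.typein μ.ord.ToType (· < ·) isWellOrder_lt j).card := by
        intro j'
        refine (hNEXT_mk _).trans ?_
        refine max_le ?_ ?_
        · refine (ih j'.1 j'.2).trans ?_
          refine add_le_add le_rfl ?_
          refine Ordinal.card_le_card ?_
          exact le_of_lt ((@Ordinal.typein_lt_typein μ.ord.ToType (· < ·) isWellOrder_lt _ _).2 j'.2)
        · exact le_trans hlam le_self_add
      calc Cardinal.mk _ ≤ Cardinal.sum fun j' : {x // x < j} =>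
            Cardinal.mk (NEXT (Vt j'.1)) := Cardinal.mk_iUnion_le_sum_mk
        _ ≤ Cardinal.sum fun _ : {x // x < j} =>
            (lam + (@Ordinal.typein μ.ord.ToType (· < ·) isWellOrder_lt j).card) :=
          Cardinal.sum_le_sum _ _ hcard
        _ = Cardinal.mk {x // x < j} * (lam + (@Ordinal.typein μ.ord.ToType (· < ·) isWellOrder_lt j).card) :=
          Cardinal.sum_const' _ _
        _ ≤ (lam + (@Ordinal.typein μ.ord.ToType (· < ·) isWellOrder_lt j).card) *
            (lam + (@Ordinal.typein μ.ord.ToType (· < ·) isWellOrder_lt j).card) := by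
          refine mul_le_mul' ?_ le_rfl
          rw [@Ordinal.card_typein μ.ord.ToType (· < ·) isWellOrder_lt]
          exact le_add_self
        _ = lam + (@Ordinal.typein μ.ord.ToType (· < ·) isWellOrder_lt j).card :=
          Cardinal.mul_eq_self (le_trans hlam le_self_add)
  have hVt_lt : ∀ j : μ.ord.ToType, Cardinal.mk (Vt j) < μ := by
    intro j
    refine lt_of_le_of_lt (hVt_mk j) ?_
    refine Cardinal.add_lt_of_lt (le_trans hlam (le_of_lt hlamμ)) hlamμ ?_
    exact Cardinal.card_typein_toType_lt μ j
  -- final set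
  refine ⟨⋃ j : μ.ord.ToType, NEXT (Vt j), ?_, ?_⟩
  · calc Cardinal.mk _ ≤ Cardinal.sum fun j : μ.ord.ToType => Cardinal.mk (NEXT (Vt j)) :=
        Cardinal.mk_iUnion_le_sum_mk
      _ ≤ Cardinal.sum fun _ : μ.ord.ToType => μ :=
        Cardinal.sum_le_sum _ _ fun j => (hNEXT_mk _).trans
          (max_le (le_of_lt (hVt_lt j)) hμ)
      _ = Cardinal.mk μ.ord.ToType * μ := Cardinal.sum_const' _ _
      _ = μ * μ := by rw [Cardinal.mk_ord_toType]
      _ = μ := Cardinal.mul_eq_self hμ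
  · intro p hp D hD
    -- find a level whose increment misses D
    have hlevel : ∃ j : μ.ord.ToType, (NEXT (Vt j) \ Vt j) ∩ D = ∅ := by
      by_contra hcon
      push_neg at hcon
      choose c hc using hcon
      have hinj : Function.Injective fun j : μ.ord.ToType => (⟨c j, (hc j).2⟩ : D) := by
        intro j j' hjj'
        by_contra hne
        rcases lt_or_gt_of_ne hne with h | h
        · have h1 : c j ∈ Vt j' := hVt_next j' j h ((hc j).1.1)
          have h2 : c j' ∉ Vt j' := (hc j').1.2
          rw [show c j = c j' from congrArg Subtype.val hjj'] at h1
          exact h2 h1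
        · have h1 : c j' ∈ Vt j := hVt_next j j' h ((hc j').1.1)
          have h2 : c j ∉ Vt j := (hc j).1.2
          rw [show c j = c j' from congrArg Subtype.val hjj'] at h2
          exact h2 h1
      have : μ ≤ Cardinal.mk D := by
        calc μ = Cardinal.mk μ.ord.ToType := (Cardinal.mk_ord_toType μ).symm
          _ ≤ Cardinal.mk D := Cardinal.mk_le_of_injective hinj
      exact absurd hD (not_lt.2 this)
    obtain ⟨j, hj⟩ := hlevel
    obtain ⟨z, hzP, hzag⟩ := exit_lemma hlam hlamμ hgap hp (Vt j) (hVt_lt j)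
    obtain ⟨G₀, hzG₀, hG₀P⟩ := exists_box_of_notMem e hbas hP hzP
    set d := G₀.filter (fun pr => pr.1 ∈ Vt j) with hd
    have hex : ∃ G : Finset (I × ℕ), (box e G ∩ P = ∅ ∧ (∃ w, w ∈ box e G)) ∧
        G.filter (fun pr => pr.1 ∈ Vt j) = d := ⟨G₀, ⟨hG₀P, z, hzG₀⟩, rfl⟩
    obtain ⟨⟨hGP, hGw⟩, hGfil⟩ := hpicked (Vt j) d hex
    have hdmem : d ∈ CodeSet (X := X) (Vt j) := by
      intro pr hpr
      exact (Finset.mem_filter.1 hpr).2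
    refine ⟨picked (Vt j) d, ?_, hGP, hGw, ?_⟩
    · intro i hi
      refine mem_iUnion.2 ⟨j, ?_⟩
      refine subset_union_right ?_
      exact mem_iUnion.2 ⟨⟨d, hdmem⟩, hi⟩
    · intro pr hpr hprD
      by_cases hiV : pr.1 ∈ Vt j
      · have h1 : pr ∈ d := by
          rw [← hGfil]
          exact Finset.mem_filter.2 ⟨hpr, hiV⟩
        have h2 : pr ∈ G₀ := (Finset.mem_filter.1 (hd ▸ h1)).1
        have h3 : z pr.1 ∈ e pr.1 pr.2 := hzG₀ pr h2
        rwa [hzag pr.1 hiV] at h3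
      · exfalso
        have h1 : pr.1 ∈ NEXT (Vt j) := by
          refine subset_union_right ?_
          refine mem_iUnion.2 ⟨⟨d, hdmem⟩, ?_⟩
          exact Finset.mem_image.2 ⟨pr, hpr, rfl⟩
        have : pr.1 ∈ (NEXT (Vt j) \ Vt j) ∩ D := ⟨⟨h1, hiV⟩, hprD⟩
        rw [hj] at this
        exact this
end Tower


section Sat
variable {I : Type u} {X : I → Type u} [∀ i, MetricSpace (X i)]
  [∀ i, CompactSpace (X i)] [∀ i, Nonempty (X i)]
  {P : Set (∀ i, X i)} (hP : IsClosed P)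
  {lam μ : Cardinal.{u}} (hlam : Cardinal.aleph0 ≤ lam) (hlamμ : lam < μ)

include hP hlam hlamμ in
lemma exists_sat_support (e : ∀ i : I, ℕ → Set (X i))
    (hbas : ∀ (i : I) (U : Set (X i)) (x : X i), IsOpen U → x ∈ U → ∃ n, x ∈ e i n ∧ e i n ⊆ U) :
    ∃ S : Set I, Cardinal.mk S ≤ μ ∧
      ∀ q ∈ lamInterior μ P \ lamInterior lam P, agree S q ⊆ P := by
  classical
  have hμ : Cardinal.aleph0 ≤ μ := le_trans hlam (le_of_lt hlamμ)
  have h1μ : (1 : Cardinal.{u}) ≤ μ := le_trans (by simp) hμ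
  set ν := Order.succ μ with hν
  have hνreg : ν.IsRegular := Cardinal.isRegular_succ hμ
  have hνinf : Cardinal.aleph0 ≤ ν := hνreg.aleph0_le
  have hμν : μ < ν := Order.lt_succ_of_not_isMax (not_isMax μ)
  have hθne : Nonempty ν.ord.ToType := by
    rw [Ordinal.toType_nonempty_iff_ne_zero]
    intro h
    have h2 := Cardinal.card_ord ν
    rw [h] at h2
    have h3 : ν = 0 := by simpa using h2.symm
    have h4 : Cardinal.aleph0 ≤ (0 : Cardinal.{u}) := h3 ▸ hνinf
    exact absurd h4 (by simp [Cardinal.aleph0_ne_zero])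
  haveI := hθne
  set Pμ := lamInterior μ P with hPμ
  set L := lamInterior lam P with hLdef
  set Bad : Set I → Prop := fun S => ∃ q, q ∈ Pμ \ L ∧ ¬ agree S q ⊆ P with hBad
  have hdata : ∀ S : Set I, ∃ (q : ∀ i, X i) (Dq : Set I) (z : ∀ i, X i) (G : Finset (I × ℕ)),
      Cardinal.mk Dq ≤ μ ∧ (Bad S → q ∈ Pμ \ L ∧ agree Dq q ⊆ P ∧
        ((∀ i ∈ S, z i = q i) ∧ z ∉ P) ∧ (z ∈ box e G ∧ box e G ∩ P = ∅)) := by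
    intro S
    by_cases h : Bad S
    · obtain ⟨q, hq, hnsub⟩ := h
      obtain ⟨z, hzag, hzP⟩ := not_subset.1 hnsub
      obtain ⟨Dq, hDq1, hDq2⟩ := agree_of_mem_lamInterior hq.1
      obtain ⟨G, hzG, hGP⟩ := exists_box_of_notMem e hbas hP hzP
      exact ⟨q, Dq, z, G, hDq1.trans (max_le le_rfl hμ),
        fun _ => ⟨hq, hDq2, ⟨hzag, hzP⟩, hzG, hGP⟩⟩
    · exact ⟨fun i => Classical.arbitrary _, ∅, fun i => Classical.arbitrary _, ∅,
        by simp, fun hb => absurd hb h⟩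
  choose qf Df zf Gf hDfmk hdf using hdata
  set STEP : Set I → Set I := fun S => (S ∪ Df S) ∪ ↑(boxSupp (X := X) (Gf S)) with hSTEP
  have hSTEP_sub : ∀ S, S ⊆ STEP S := fun S =>
    subset_trans subset_union_left subset_union_left
  have hSTEP_mk : ∀ S : Set I, Cardinal.mk S ≤ μ → Cardinal.mk (STEP S) ≤ μ := by
    intro S hS
    calc Cardinal.mk (STEP S) ≤ (Cardinal.mk (S ∪ Df S : Set I)) +
          Cardinal.mk (↑(boxSupp (X := X) (Gf S)) : Set I) := Cardinal.mk_union_le _ _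
      _ ≤ (Cardinal.mk S + Cardinal.mk (Df S)) + Cardinal.aleph0 :=
          add_le_add (Cardinal.mk_union_le _ _) (le_of_lt (Cardinal.lt_aleph0_of_finite _))
      _ ≤ (μ + μ) + μ := add_le_add (add_le_add hS (hDfmk S)) hμ
      _ = μ := by rw [Cardinal.add_eq_self hμ, Cardinal.add_eq_self hμ]
  -- the tower
  set T : ν.ord.ToType → Set I := (IsWellFounded.wf (α := ν.ord.ToType) (r := (· < ·))).fix
    (fun η ih => ⋃ η' : {x // x < η}, STEP (ih η'.1 η'.2)) with hT
  have hT_eq : ∀ η, T η = ⋃ η' : {x // x < η}, STEP (T η'.1) := fun η =>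
    WellFounded.fix_eq _ _ η
  have hT_next : ∀ η η', η' < η → STEP (T η') ⊆ T η := by
    intro η η' hη
    rw [hT_eq η]
    exact subset_iUnion_of_subset ⟨η', hη⟩ (le_refl _)
  have hT_mono : ∀ η η', η' < η → T η' ⊆ T η := fun η η' hη =>
    (hSTEP_sub _).trans (hT_next η η' hη)
  have hIio_mk : ∀ η : ν.ord.ToType, Cardinal.mk {x // x < η} ≤ μ := by
    intro η
    have h1 : Cardinal.mk (Iio η) < ν := Cardinal.mk_Iio_ord_toType η
    have : Cardinal.mk {x // x < η} = Cardinal.mk (Iio η) := rfl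
    rw [this]
    exact Order.lt_succ_iff_of_not_isMax (not_isMax μ) |>.1 h1
  have hT_mk : ∀ η, Cardinal.mk (T η) ≤ μ := by
    intro η
    induction η using ((IsWellFounded.wf (α := ν.ord.ToType) (r := (· < ·)))).induction with
    | _ η ih =>
      rw [hT_eq η]
      calc Cardinal.mk _ ≤ Cardinal.sum fun η' : {x // x < η} =>
            Cardinal.mk (STEP (T η'.1)) := Cardinal.mk_iUnion_le_sum_mk
        _ ≤ Cardinal.sum fun _ : {x // x < η} => μ :=
            Cardinal.sum_le_sum _ _ fun η' => hSTEP_mk _ (ih η'.1 η'.2)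
        _ = Cardinal.mk {x // x < η} * μ := Cardinal.sum_const' _ _
        _ ≤ μ * μ := mul_le_mul' (hIio_mk η) le_rfl
        _ = μ := Cardinal.mul_eq_self hμ
  -- suppose no stage works
  by_contra hcon
  push_neg at hcon
  have hAllBad : ∀ η, Bad (T η) := by
    intro η
    obtain ⟨q, hq, hnsub⟩ := hcon (T η) (hT_mk η)
    exact ⟨q, hq, hnsub⟩
  -- aligned part of the box at stage η
  set E0 : ν.ord.ToType → Finset (I × ℕ) := fun η =>
    (Gf (T η)).filter (fun pr => pr.1 ∈ T η) with hE0
  -- limit positions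
  set LIM : Set ν.ord.ToType := {η | (∃ x, x < η) ∧ ∀ x, x < η → ∃ y, x < y ∧ y < η} with hLIM
  have hg' : ∀ η : ν.ord.ToType, ∃ ζ, η ∈ LIM →
      ζ < η ∧ (↑(boxSupp (X := X) (E0 η)) : Set I) ⊆ T ζ := by
    intro η
    by_cases hηL : η ∈ LIM
    · have hWsub : ∀ i : I, ∃ η', i ∈ (boxSupp (X := X) (E0 η) : Finset I) →
          η' < η ∧ i ∈ STEP (T η') := by
        intro i
        by_cases hi : i ∈ (boxSupp (X := X) (E0 η) : Finset I)
        · obtain ⟨pr, hpr, hpreq⟩ := Finset.mem_image.1 hi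
          have h1 : pr.1 ∈ T η := (Finset.mem_filter.1 hpr).2
          rw [hT_eq η] at h1
          obtain ⟨s, hs⟩ := mem_iUnion.1 h1
          exact ⟨s.1, fun _ => ⟨s.2, hpreq ▸ hs⟩⟩
        · exact ⟨Classical.arbitrary _, fun h => absurd h hi⟩
      choose ηi hηi using hWsub
      rcases Finset.eq_empty_or_nonempty (boxSupp (X := X) (E0 η)) with hem | hne
      · obtain ⟨x, hx⟩ := hηL.1
        exact ⟨x, fun _ => ⟨hx, by rw [hem]; simp⟩⟩
      · have hmlt : ((boxSupp (X := X) (E0 η)).image ηi).max' (hne.image _) < η := by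
          obtain ⟨i, hiW, hieq⟩ := Finset.mem_image.1
            (((boxSupp (X := X) (E0 η)).image ηi).max'_mem (hne.image _))
          rw [← hieq]
          exact (hηi i hiW).1
        obtain ⟨y, hy1, hy2⟩ := hηL.2 _ hmlt
        refine ⟨y, fun _ => ⟨hy2, ?_⟩⟩
        intro i hi
        have h1 : ηi i ≤ ((boxSupp (X := X) (E0 η)).image ηi).max' (hne.image _) :=
          Finset.le_max' _ _ (Finset.mem_image.2 ⟨i, hi, rfl⟩)
        have h2 : ηi i < y := lt_of_le_of_lt h1 hy1
        exact hT_next y _ h2 (hηi i hi).2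
    · exact ⟨Classical.arbitrary _, fun h => absurd h hηL⟩
  choose g hg using hg'
  -- fibers
  set Fib : ν.ord.ToType → Set ν.ord.ToType := fun ζ => {η | η ∈ LIM ∧ g η = ζ} with hFib
  -- bounding small sets
  have hbnd' : ∀ S : Set ν.ord.ToType, ∃ b, Cardinal.mk S ≤ μ → ∀ x ∈ S, x < b := by
    intro S
    by_cases h : Cardinal.mk S ≤ μ
    · have hlt : Cardinal.mk S < ν := lt_of_le_of_lt h hμν
      have hB : Set.Bounded (· < ·) S := by
        by_contra hnb
        have hcof : IsCofinal S := by_contra fun hc => hnb (not_isCofinal_iff.1 hc)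
        have hle := Order.cof_le hcof
        rw [Ordinal.cof_toType, hνreg.cof_eq] at hle
        exact absurd hlt (not_lt.2 hle)
      obtain ⟨b, hb⟩ := hB
      exact ⟨b, fun _ => hb⟩
    · exact ⟨Classical.arbitrary _, fun hc => absurd hc h⟩
  choose bnd hbnd using hbnd'
  -- main dichotomy: some fiber is large
  have hbig : ∃ ζ, ¬ Cardinal.mk (Fib ζ) ≤ μ := by
    by_contra hfib
    push_neg at hfib
    set Uset : ν.ord.ToType → Set ν.ord.ToType := fun x => {η | η ∈ LIM ∧ g η ≤ x} with hUset
    have hUmk : ∀ x, Cardinal.mk (Uset x ∪ {x} : Set ν.ord.ToType) ≤ μ := by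
      intro x
      have h0 : Uset x = ⋃ ζ : (Iic x : Set ν.ord.ToType), Fib ζ.1 := by
        ext η
        simp only [hUset, mem_setOf_eq, mem_iUnion, hFib]
        constructor
        · rintro ⟨h1, h2⟩
          exact ⟨⟨g η, h2⟩, h1, rfl⟩
        · rintro ⟨⟨ζ, hζ⟩, h1, rfl⟩
          exact ⟨h1, hζ⟩
      have hIic : Cardinal.mk (Iic x : Set ν.ord.ToType) ≤ μ := by
        have : (Iic x : Set ν.ord.ToType) = Iio x ∪ {x} := by
          ext y
          simp [le_iff_lt_or_eq]
        rw [this]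
        calc Cardinal.mk _ ≤ Cardinal.mk (Iio x : Set ν.ord.ToType) + 1 := by
              refine (Cardinal.mk_union_le _ _).trans ?_
              simp
          _ ≤ μ + μ := add_le_add
              ((Order.lt_succ_iff_of_not_isMax (not_isMax μ)).1
                (Cardinal.mk_Iio_ord_toType x)) h1μ
          _ = μ := Cardinal.add_eq_self hμ
      have h2 : Cardinal.mk (Uset x) ≤ μ := by
        rw [h0]
        calc Cardinal.mk _ ≤ Cardinal.sum fun ζ : (Iic x : Set ν.ord.ToType) =>
              Cardinal.mk (Fib ζ.1) := Cardinal.mk_iUnion_le_sum_mk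
          _ ≤ Cardinal.sum fun _ : (Iic x : Set ν.ord.ToType) => μ :=
            Cardinal.sum_le_sum _ _ fun ζ => hfib ζ.1
          _ = Cardinal.mk (Iic x : Set ν.ord.ToType) * μ := Cardinal.sum_const' _ _
          _ ≤ μ * μ := mul_le_mul' hIic le_rfl
          _ = μ := Cardinal.mul_eq_self hμ
      calc Cardinal.mk _ ≤ Cardinal.mk (Uset x) + 1 := by
            refine (Cardinal.mk_union_le _ _).trans ?_
            simp
        _ ≤ μ + μ := add_le_add h2 h1μ
        _ = μ := Cardinal.add_eq_self hμ
    -- the ω-chain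
    set h : ℕ → ν.ord.ToType := fun k =>
      Nat.rec (Classical.arbitrary _) (fun _ hk => bnd (Uset hk ∪ {hk})) k with hh
    have hstep : ∀ k, ∀ x ∈ Uset (h k) ∪ {h k}, x < h (k + 1) := by
      intro k
      exact hbnd _ (hUmk (h k))
    have hmono : ∀ k, h k < h (k + 1) := fun k =>
      hstep k (h k) (mem_union_right _ rfl)
    have hmono' : ∀ k l, k < l → h k < h l := by
      intro k l hkl
      induction l with
      | zero => omega
      | succ n ih =>
        rcases Nat.lt_succ_iff_lt_or_eq.1 hkl with h' | h'
        · exact lt_trans (ih h') (hmono n)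
        · rw [h']; exact hmono n
    -- upper bound of the chain
    have hrange : Cardinal.mk (range h) ≤ μ := by
      exact le_trans (Set.countable_range h).le_aleph0 hμ
    have hUB : ∀ x ∈ range h, x < bnd (range h) := hbnd _ hrange
    set UB : Set ν.ord.ToType := {b | ∀ k, h k < b} with hUBdef
    have hUBne : UB.Nonempty := ⟨bnd (range h), fun k => hUB _ (mem_range_self k)⟩
    set δ := (IsWellFounded.wf (α := ν.ord.ToType) (r := (· < ·))).min UB hUBne with hδ
    have hδUB : δ ∈ UB := WellFounded.min_mem _ UB hUBne
    have hδmin : ∀ x ∈ UB, ¬ x < δ := fun x hx => WellFounded.not_lt_min _ UB hx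
    have hδLIM : δ ∈ LIM := by
      constructor
      · exact ⟨h 0, hδUB 0⟩
      · intro x hx
        have hxnUB : x ∉ UB := fun hxUB => hδmin x hxUB hx
        simp only [hUBdef, mem_setOf_eq, not_forall, not_lt] at hxnUB
        obtain ⟨k, hk⟩ := hxnUB
        exact ⟨h (k + 1), lt_of_le_of_lt hk (hmono k), hδUB (k + 1)⟩
    have hgδ : g δ < δ := (hg δ hδLIM).1
    have hgδnUB : g δ ∉ UB := fun hxUB => hδmin _ hxUB hgδ
    simp only [hUBdef, mem_setOf_eq, not_forall, not_lt] at hgδnUB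
    obtain ⟨k, hk⟩ := hgδnUB
    have hδU : δ ∈ Uset (h k) := ⟨hδLIM, hk⟩
    have h1 : δ < h (k + 1) := hstep k δ (mem_union_left _ hδU)
    exact absurd h1 (not_lt.2 (le_of_lt (hδUB (k + 1))))
  obtain ⟨ζs, hζs⟩ := hbig
  push_neg at hζs
  -- pigeonhole on the aligned data
  have hdatamap : ∀ η : Fib ζs, E0 η.1 ∈ CodeSet (X := X) (T ζs) := by
    rintro ⟨η, hηL, hηζ⟩
    intro pr hpr
    have h1 : pr.1 ∈ (boxSupp (X := X) (E0 η) : Finset I) :=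
      Finset.mem_image.2 ⟨pr, hpr, rfl⟩
    have h2 := (hg η hηL).2 h1
    rwa [hηζ] at h2
  have hninj : ¬ Function.Injective
      (fun η : Fib ζs => (⟨E0 η.1, hdatamap η⟩ : CodeSet (X := X) (T ζs))) := by
    intro hinj
    have h1 : Cardinal.mk (Fib ζs) ≤ Cardinal.mk (CodeSet (X := X) (T ζs)) :=
      Cardinal.mk_le_of_injective hinj
    have h2 : Cardinal.mk (CodeSet (X := X) (T ζs)) ≤ μ :=
      (mk_codeSet_le _).trans (max_le (hT_mk ζs) hμ)
    exact absurd (h1.trans h2) (not_le.2 hζs)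
  simp only [Function.Injective, not_forall] at hninj
  obtain ⟨η₁, η₂, heq, hne⟩ := hninj
  have hE0eq : E0 η₁.1 = E0 η₂.1 := congrArg Subtype.val heq
  have hne' : η₁.1 ≠ η₂.1 := fun h => hne (Subtype.ext h)
  -- the final contradiction, for ordered stages with equal aligned data
  have final : ∀ a b : ν.ord.ToType, a < b → E0 a = E0 b → False := by
    intro a b hab hE
    have hBa := hdf (T a) (hAllBad a)
    have hBb := hdf (T b) (hAllBad b)
    set y' : ∀ i, X i := fun i =>
      if i ∈ (boxSupp (X := X) ((Gf (T b)).filter (fun pr => pr.1 ∉ T b)) : Finset I)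
      then zf (T b) i else qf (T a) i with hy'
    have hmod : ∀ i, i ∈ (boxSupp (X := X)
        ((Gf (T b)).filter (fun pr => pr.1 ∉ T b)) : Finset I) → i ∉ T b := by
      intro i hi
      obtain ⟨pr, hpr, rfl⟩ := Finset.mem_image.1 hi
      exact (Finset.mem_filter.1 hpr).2
    have hyP : y' ∈ P := by
      apply hBa.2.1
      intro i hi
      have h1 : i ∈ T b := hT_next b a hab
        (mem_union_left _ (mem_union_right _ hi))
      show y' i = qf (T a) i
      rw [hy']
      simp only
      rw [if_neg (fun hmem => (hmod i hmem) h1)]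
    have hybox : y' ∈ box e (Gf (T b)) := by
      intro pr hpr
      by_cases hprT : pr.1 ∈ T b
      · have h1 : pr ∈ E0 b := Finset.mem_filter.2 ⟨hpr, hprT⟩
        rw [← hE] at h1
        have h2 : pr ∈ Gf (T a) := (Finset.mem_filter.1 h1).1
        have h3 : pr.1 ∈ T a := (Finset.mem_filter.1 h1).2
        have h4 : zf (T a) pr.1 ∈ e pr.1 pr.2 := hBa.2.2.2.1 pr h2
        have h5 : zf (T a) pr.1 = qf (T a) pr.1 := hBa.2.2.1.1 pr.1 h3
        have h6 : y' pr.1 = qf (T a) pr.1 := by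
          rw [hy']
          simp only
          rw [if_neg (fun hmem => (hmod pr.1 hmem) hprT)]
        rw [h6, ← h5]
        exact h4
      · have h1 : pr.1 ∈ (boxSupp (X := X)
            ((Gf (T b)).filter (fun pr => pr.1 ∉ T b)) : Finset I) :=
          Finset.mem_image.2 ⟨pr, Finset.mem_filter.2 ⟨hpr, hprT⟩, rfl⟩
        have h6 : y' pr.1 = zf (T b) pr.1 := by
          rw [hy']
          simp only
          rw [if_pos h1]
        rw [h6]
        exact hBb.2.2.2.1 pr hpr
    have hemp := hBb.2.2.2.2
    rw [eq_empty_iff_forall_notMem] at hemp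
    exact hemp y' ⟨hybox, hyP⟩
  rcases lt_or_gt_of_ne hne' with hlt | hlt
  · exact final η₁.1 η₂.1 hlt hE0eq
  · exact final η₂.1 η₁.1 hlt hE0eq.symm
end Sat

/-- Proposition 2.3 of the paper. -/
theorem stmt4 {I : Type u} {X : I → Type u} [∀ i, MetricSpace (X i)]
    [∀ i, CompactSpace (X i)] [∀ i, Nonempty (X i)]
    (P : Set (∀ i, X i)) (hP : IsClosed P) (f : P ≃ₜ P)
    (hf : ∀ κ : Cardinal.{u}, imageOn f (lamInterior κ P) = lamInterior κ P)
    (lam μ : Cardinal.{u}) (hlam : Cardinal.aleph0 ≤ lam) (hlamμ : lam < μ)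
    (hμI : μ ≤ Cardinal.mk I)
    (hgap : ∀ β : Cardinal.{u}, lam ≤ β → β < μ → lamInterior β P \ lamInterior lam P = ∅)
    (hPne : P ≠ lamInterior lam P)
    (C : Set I) (hCadm : IsAdmissible P f C) (hCcard : Cardinal.mk C = lam)
    (hCsat : proj C ⁻¹' (proj C '' lamInterior lam P) = lamInterior lam P) :
    ∃ B : Set I, ∃ hCB : C ⊆ B, Cardinal.mk B = μ ∧ IsAdmissible P f B ∧
      proj B ⁻¹' (proj B '' lamInterior μ P) = lamInterior μ P ∧
      (∀ F : Set (∀ b : B, X b), IsCompact F →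
        F ⊆ (proj B '' P) \ (proj B '' lamInterior lam P) → IsNegligible μ F) ∧
      (∀ x ∈ (proj C '' P) \ (proj C '' lamInterior lam P),
        IsNegligible μ
          (projDiff (C := C) '' ({y : ∀ b : B, X b | projRes hCB y = x} ∩ proj B '' P))) ∧
      (∀ α ∈ B, ∃ Bα : Set I, α ∈ Bα ∧ Bα.Countable ∧ Bα ⊆ B ∧ IsAdmissible P f Bα) := by
  classical
  obtain ⟨e, he_open, he_bas⟩ := exists_basis_enum (I := I) (X := X)
  have hμ : Cardinal.aleph0 ≤ μ := le_trans hlam (le_of_lt hlamμ)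
  -- the witness tower and the saturation support
  obtain ⟨Vbig, hVmk, hVprop⟩ := exists_witness_support hP hlam hlamμ hgap e he_bas hμ
  obtain ⟨Sstar, hSmk, hSprop⟩ := exists_sat_support hP hlam hlamμ (μ := μ) e he_bas
  obtain ⟨Filler, hFillmk⟩ := Cardinal.le_mk_iff_exists_set.1 hμI
  set Y : Set I := ((C ∪ Vbig) ∪ Sstar) ∪ Filler with hY
  have hMex : ∀ y : Y, ∃ M : Set I, ({y.1} : Set I) ⊆ M ∧ M.Countable ∧ Good P f M :=
    fun y => exists_countable_good hP {y.1} (countable_singleton _)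
  choose M hM1 hM2 hM3 using hMex
  set B : Set I := ⋃ y : Y, M y with hB
  have hYB : Y ⊆ B := fun i hi => mem_iUnion.2 ⟨⟨i, hi⟩, hM1 ⟨i, hi⟩ rfl⟩
  have hCB : C ⊆ B := fun i hi => hYB (Or.inl (Or.inl (Or.inl hi)))
  have hVB : Vbig ⊆ B := fun i hi => hYB (Or.inl (Or.inl (Or.inr hi)))
  have hSB : Sstar ⊆ B := fun i hi => hYB (Or.inl (Or.inr hi))
  have hFB : Filler ⊆ B := fun i hi => hYB (Or.inr hi)
  -- cardinality
  have hYmk : Cardinal.mk Y ≤ μ := by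
    calc Cardinal.mk Y ≤ Cardinal.mk ((C ∪ Vbig) ∪ Sstar : Set I) + Cardinal.mk Filler :=
        Cardinal.mk_union_le _ _
      _ ≤ ((Cardinal.mk C + Cardinal.mk Vbig) + Cardinal.mk Sstar) + Cardinal.mk Filler := by
        refine add_le_add ?_ le_rfl
        refine le_trans (Cardinal.mk_union_le _ _) ?_
        exact add_le_add (Cardinal.mk_union_le _ _) le_rfl
      _ ≤ ((μ + μ) + μ) + μ := by
        refine add_le_add (add_le_add (add_le_add ?_ hVmk) hSmk) (le_of_eq hFillmk)
        rw [hCcard]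
        exact le_of_lt hlamμ
      _ = μ := by rw [Cardinal.add_eq_self hμ, Cardinal.add_eq_self hμ,
        Cardinal.add_eq_self hμ]
  have hBle : Cardinal.mk B ≤ μ := by
    calc Cardinal.mk B ≤ Cardinal.sum fun y : Y => Cardinal.mk (M y) :=
        Cardinal.mk_iUnion_le_sum_mk
      _ ≤ Cardinal.sum fun _ : Y => Cardinal.aleph0 :=
        Cardinal.sum_le_sum _ _ fun y => (hM2 y).le_aleph0
      _ = Cardinal.mk Y * Cardinal.aleph0 := Cardinal.sum_const' _ _
      _ ≤ μ * μ := mul_le_mul' hYmk hμ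
      _ = μ := Cardinal.mul_eq_self hμ
  have hBmk : Cardinal.mk B = μ := by
    refine le_antisymm hBle ?_
    rw [← hFillmk]
    exact Cardinal.mk_le_mk_of_subset hFB
  have hGoodB : Good P f B := good_iUnion P f fun y => hM3 y
  refine ⟨B, hCB, hBmk, isAdmissible_of_good hP hGoodB, ?_, ?_, ?_, ?_⟩
  -- (i) saturation at μ
  · refine Set.eq_of_subset_of_subset ?_ ?_
    · rintro v ⟨q, hqPμ, hqv⟩
      by_cases hqL : q ∈ lamInterior lam P
      · have h1 : proj C v = proj C q := by
          funext c
          exact (congrFun hqv ⟨c.1, hCB c.2⟩).symm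
        have h2 : v ∈ proj C ⁻¹' (proj C '' lamInterior lam P) := by
          rw [mem_preimage, h1]
          exact ⟨q, hqL, rfl⟩
        rw [hCsat] at h2
        exact lamInterior_mono_card (le_of_lt hlamμ) P h2
      · have hagree : agree Sstar v ⊆ P := by
          intro z hz
          refine hSprop q ⟨hqPμ, hqL⟩ ?_
          intro i hi
          rw [hz i hi]
          exact (congrFun hqv ⟨i, hSB hi⟩).symm
        exact mem_lamInterior_of_agree hμ hSmk hagree
    · intro x hx
      exact ⟨x, hx, rfl⟩
  -- (ii) compact subsets of P_B away from the λ-interior are μ-negligible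
  · intro F hFc hFsub β hβ
    rw [eq_empty_iff_forall_notMem]
    intro x hx
    have hxF : x ∈ F := lamInterior_subset β F hx
    obtain ⟨D', hD'mk, hD'sub⟩ := agree_of_mem_lamInterior hx
    obtain ⟨p, hpP, hpx⟩ := (hFsub hxF).1
    have hxnL : x ∉ proj B '' lamInterior lam P := (hFsub hxF).2
    have hpnL : p ∉ lamInterior lam P := fun h => hxnL ⟨p, h, hpx⟩
    set DI : Set I := Subtype.val '' D' with hDI
    have hDImk : Cardinal.mk DI < μ := by
      refine lt_of_le_of_lt Cardinal.mk_image_le ?_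
      refine lt_of_le_of_lt hD'mk ?_
      exact max_lt hβ (lt_of_le_of_lt hlam hlamμ)
    obtain ⟨G, hGsupp, hGP, ⟨w, hw⟩, hGalign⟩ := hVprop p ⟨hpP, hpnL⟩ DI hDImk
    set y : ∀ b : B, X b.1 := fun b => if b.1 ∈ DI then x b else w b.1 with hy
    have hyF : y ∈ F := by
      refine hD'sub ?_
      intro b hb
      show y b = x b
      rw [hy]
      simp only
      rw [if_pos ⟨b, hb, rfl⟩]
    obtain ⟨p', hp'P, hp'y⟩ := (hFsub hyF).1
    have hp'box : p' ∈ box e G := by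
      intro pr hpr
      have hprB : pr.1 ∈ B := hVB (hGsupp (Finset.mem_image.2 ⟨pr, hpr, rfl⟩))
      have h1 : p' pr.1 = y ⟨pr.1, hprB⟩ := congrFun hp'y ⟨pr.1, hprB⟩
      by_cases hD : pr.1 ∈ DI
      · have h2 : y ⟨pr.1, hprB⟩ = x ⟨pr.1, hprB⟩ := if_pos hD
        have h3 : p pr.1 = x ⟨pr.1, hprB⟩ := congrFun hpx ⟨pr.1, hprB⟩
        rw [h1, h2, ← h3]
        exact hGalign pr hpr hD
      · have h2 : y ⟨pr.1, hprB⟩ = w pr.1 := if_neg hD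
        rw [h1, h2]
        exact hw pr hpr
    rw [eq_empty_iff_forall_notMem] at hGP
    exact hGP p' ⟨hp'box, hp'P⟩
  -- (iii) fibers over points outside the λ-interior are μ-negligible
  · intro x hx β hβ
    rw [eq_empty_iff_forall_notMem]
    intro y0 hy0
    have hy0Q : y0 ∈ projDiff (C := C) ''
        ({y : ∀ b : B, X b.1 | projRes hCB y = x} ∩ proj B '' P) :=
      lamInterior_subset β _ hy0
    obtain ⟨yt, ⟨hfib, hPB⟩, hproj⟩ := hy0Q
    obtain ⟨p, hpP, hpyt⟩ := hPB
    have hpC : ∀ c : C, p c.1 = x c := by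
      intro c
      have h1 : yt ⟨c.1, hCB c.2⟩ = x c := congrFun hfib c
      rw [← h1, ← hpyt]
      rfl
    have hxpC : proj C p = x := funext fun c => hpC c
    have hpnL : p ∉ lamInterior lam P := fun h => hx.2 ⟨p, h, hxpC⟩
    obtain ⟨D', hD'mk, hD'sub⟩ := agree_of_mem_lamInterior hy0
    set DI : Set I := C ∪ Subtype.val '' D' with hDI
    have hDImk : Cardinal.mk DI < μ := by
      refine lt_of_le_of_lt (Cardinal.mk_union_le _ _) ?_
      refine Cardinal.add_lt_of_lt hμ ?_ ?_
      · rw [hCcard]; exact hlamμ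
      · refine lt_of_le_of_lt Cardinal.mk_image_le ?_
        refine lt_of_le_of_lt hD'mk ?_
        exact max_lt hβ (lt_of_le_of_lt hlam hlamμ)
    obtain ⟨G, hGsupp, hGP, ⟨w, hw⟩, hGalign⟩ := hVprop p ⟨hpP, hpnL⟩ DI hDImk
    set y1 : ∀ d : (B \ C : Set I), X d.1 := fun d =>
      if d.1 ∈ (Subtype.val '' D' : Set I) then y0 d else w d.1 with hy1
    have hy1Q : y1 ∈ projDiff (C := C) ''
        ({y : ∀ b : B, X b.1 | projRes hCB y = x} ∩ proj B '' P) := by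
      refine hD'sub ?_
      intro d hd
      show y1 d = y0 d
      rw [hy1]
      simp only
      rw [if_pos ⟨d, hd, rfl⟩]
    obtain ⟨yt1, ⟨hfib₁, hPB₁⟩, hproj₁⟩ := hy1Q
    obtain ⟨p', hp'P, hp'yt1⟩ := hPB₁
    have hp'box : p' ∈ box e G := by
      intro pr hpr
      have hprB : pr.1 ∈ B := hVB (hGsupp (Finset.mem_image.2 ⟨pr, hpr, rfl⟩))
      have h1 : p' pr.1 = yt1 ⟨pr.1, hprB⟩ := by rw [← hp'yt1]; rfl
      by_cases hprC : pr.1 ∈ C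
      · have h2 : yt1 ⟨pr.1, hprB⟩ = x ⟨pr.1, hprC⟩ := by
          have := congrFun hfib₁ ⟨pr.1, hprC⟩
          exact this
        have h3 : p pr.1 = x ⟨pr.1, hprC⟩ := hpC ⟨pr.1, hprC⟩
        rw [h1, h2, ← h3]
        exact hGalign pr hpr (Or.inl hprC)
      · have hprBC : pr.1 ∈ (B \ C : Set I) := ⟨hprB, hprC⟩
        have h2 : yt1 ⟨pr.1, hprB⟩ = y1 ⟨pr.1, hprBC⟩ := by
          rw [← hproj₁]
          rfl
        by_cases hprD : pr.1 ∈ (Subtype.val '' D' : Set I)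
        · have h3 : y1 ⟨pr.1, hprBC⟩ = y0 ⟨pr.1, hprBC⟩ := if_pos hprD
          have h4 : y0 ⟨pr.1, hprBC⟩ = yt ⟨pr.1, hprB⟩ := by
            rw [← hproj]
            rfl
          have h5 : yt ⟨pr.1, hprB⟩ = p pr.1 := by rw [← hpyt]; rfl
          rw [h1, h2, h3, h4, h5]
          exact hGalign pr hpr (Or.inr hprD)
        · have h3 : y1 ⟨pr.1, hprBC⟩ = w pr.1 := if_neg hprD
          rw [h1, h2, h3]
          exact hw pr hpr
    rw [eq_empty_iff_forall_notMem] at hGP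
    exact hGP p' ⟨hp'box, hp'P⟩
  -- (iv) countable admissible covers
  · intro α hα
    obtain ⟨y, hy⟩ := mem_iUnion.1 hα
    exact ⟨M y, hy, hM2 y, fun i hi => mem_iUnion.2 ⟨y, hi⟩,
      isAdmissible_of_good hP (hM3 y)⟩
end

section
/- Let X = ∏_{α∈A} X_α be a product of nonempty compact metric spaces with |A| = τ an infinite cardinal, and let K ⊆ H(X) be a Lindelöf subset of the group H(X) of self-homeomorphisms of X with the compact-open topology. Then A can be covered by a family {A(α) : α < ω(τ)} of subsets of A, indexed by the ordinals below the initial ordinal ω(τ) of τ, such that: A(0) is countable; A(α) = ⋃_{γ<α} A(γ) whenever α is a limit ordinal; A(α) ⊆ A(α+1) and A(α+1) ∖ A(α) is countable for every α; and for every f ∈ K and every α there is a homeomorphism f_α ∈ H(X_{A(α)}) with π_{A(α)} ∘ f = f_α ∘ π_{A(α)}. -/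
/-!
A continuous map from a compact product into a metric space depends on countably many
coordinates. A Lindelöf subset of the metric space `C(X, X_i)` is separable and depending on a
fixed set of coordinates is a closed condition, so one countable set `D(i)` of coordinates
determines the `i`-th coordinate of every `f ∈ K` and, inversion being continuous on `H(X)`, of
every `f⁻¹`. Closing `{i}` under `D` gives countable sets `g(i)`; enumerating the index set
injectively by ordinals `E(i) < ω(τ)`, put `A(α) = ⋃_{E(i) < α} g(i)`. Each `A(α)` is closed
under `D`, so `f` and `f⁻¹` induce mutually inverse continuous maps of `X_{A(α)}`.
-/

universe u

open Set

/-- A self-homeomorphism viewed as an element of `C(Z, Z)`; the group `H(Z)` of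
self-homeomorphisms with the compact-open topology is the range of this map with the
subspace topology. -/
def toCM {Z : Type u} [TopologicalSpace Z] (h : Z ≃ₜ Z) : C(Z, Z) :=
  ⟨⇑h, h.continuous⟩

open Filter Function
open scoped Uniformity

section Dependence

variable {I : Type u} {X : I → Type u}

lemma Pi.exists_finite_forall_eq_imp_mem_of_mem_uniformity [∀ i, UniformSpace (X i)]
    {U : Set ((∀ i, X i) × (∀ i, X i))} (hU : U ∈ 𝓤 (∀ i, X i)) :
    ∃ F : Set I, F.Finite ∧ ∀ x y : ∀ i, X i, (∀ j ∈ F, x j = y j) → (x, y) ∈ U := by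
  rw [Pi.uniformity, mem_iInf] at hU
  obtain ⟨F, hF, V, hV, rfl⟩ := hU
  refine ⟨F, hF, fun x y hxy => mem_iInter.2 fun i => ?_⟩
  obtain ⟨W, hW, hWV⟩ := mem_comap.1 (hV i)
  exact hWV (by simpa [hxy i i.2] using refl_mem_uniformity hW)

lemma ContinuousMap.exists_countable_dependsOn [∀ i, UniformSpace (X i)]
    [∀ i, CompactSpace (X i)] {Y : Type u} [MetricSpace Y] (g : C((∀ i, X i), Y)) :
    ∃ S : Set I, S.Countable ∧ DependsOn g S := by
  have hg := CompactSpace.uniformContinuous_of_continuous g.continuous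
  have approx (n : ℕ) : ∃ F : Set I, F.Finite ∧ ∀ x y : ∀ i, X i,
      (∀ j ∈ F, x j = y j) → dist (g x) (g y) < 1 / (n + 1) :=
    Pi.exists_finite_forall_eq_imp_mem_of_mem_uniformity
      (hg (Metric.dist_mem_uniformity (by positivity)))
  choose F hF hFg using approx
  refine ⟨⋃ n, F n, countable_iUnion fun n => (hF n).countable, fun x y hxy => ?_⟩
  refine eq_of_forall_dist_le fun ε hε => ?_
  obtain ⟨n, hn⟩ := exists_nat_one_div_lt hε
  exact (hFg n x y fun j hj => hxy j (mem_iUnion_of_mem n hj)).le.trans hn.le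

lemma isClosed_setOf_dependsOn [∀ i, TopologicalSpace (X i)] {Y : Type u} [TopologicalSpace Y]
    [T2Space Y] (S : Set I) : IsClosed {g : C((∀ i, X i), Y) | DependsOn g S} := by
  simp only [DependsOn, ofPred_forall]
  exact isClosed_iInter fun x => isClosed_iInter fun y => isClosed_iInter fun _ =>
    isClosed_eq (continuous_eval_const x) (continuous_eval_const y)

/-- A Lindelöf subset of the metric space `C(∏ X, Y)` is separable, and dependence on a fixed
set of coordinates passes to limits. -/
lemma IsLindelof.exists_countable_dependsOn [∀ i, UniformSpace (X i)] [∀ i, CompactSpace (X i)]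
    {Y : Type u} [MetricSpace Y] {L : Set C((∀ i, X i), Y)} (hL : IsLindelof L) :
    ∃ S : Set I, S.Countable ∧ ∀ g ∈ L, DependsOn g S := by
  have := isLindelof_iff_lindelofSpace.1 hL
  obtain ⟨T, hTc, hT⟩ := TopologicalSpace.exists_countable_dense L
  choose S hSc hS using fun g : C((∀ i, X i), Y) => g.exists_countable_dependsOn
  refine ⟨⋃ g ∈ T, S g, hTc.biUnion fun g _ => hSc g, fun g hg => ?_⟩
  have hclosed := (isClosed_setOf_dependsOn (⋃ g ∈ T, S g)).preimage
    (continuous_subtype_val (p := (· ∈ L)))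
  exact hclosed.closure_subset_iff.2 (fun g hg => (hS g).mono (subset_biUnion_of_mem hg))
    (hT ⟨g, hg⟩)

end Dependence

/-- Inversion is continuous on `H(Z)` for compact Hausdorff `Z`, because
`f⁻¹(C) ⊆ U ↔ f(Uᶜ) ⊆ Cᶜ` and `Uᶜ` is compact, `Cᶜ` open. -/
lemma IsLindelof.image_toCM_symm {Z : Type u} [TopologicalSpace Z] [CompactSpace Z] [T2Space Z]
    {K : Set (Z ≃ₜ Z)} (hK : IsLindelof (toCM '' K)) :
    IsLindelof (toCM '' (Homeomorph.symm '' K)) := by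
  let _ : TopologicalSpace (Z ≃ₜ Z) := .induced toCM inferInstance
  have hind : Topology.IsInducing (toCM (Z := Z)) := ⟨rfl⟩
  have hcont : Continuous fun h : Z ≃ₜ Z => toCM h.symm := by
    rw [ContinuousMap.continuous_compactOpen]
    intro C hC U hU
    have hcompl : {h : Z ≃ₜ Z | MapsTo (toCM h.symm) C U} =
        toCM ⁻¹' {m | MapsTo m Uᶜ Cᶜ} := by
      ext h
      simp only [mem_ofPred_eq, mem_preimage, toCM, ContinuousMap.coe_mk]
      constructor
      · exact fun hCU z hz hzC => hz (by simpa using hCU hzC)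
      · exact fun hUC z hz => by_contra fun hzU => hUC hzU (by simpa using hz)
    rw [hcompl]
    exact (ContinuousMap.isOpen_setOfPred_mapsTo hU.isClosed_compl.isCompact
      hC.isClosed.isOpen_compl).preimage hind.continuous
  rw [image_image]
  exact (hind.isLindelof_iff.2 hK).image hcont

lemma exists_countable_dependsOn_homeomorph_apply {I : Type u} {X : I → Type u}
    [∀ i, MetricSpace (X i)] [∀ i, CompactSpace (X i)] {K : Set ((∀ i, X i) ≃ₜ (∀ i, X i))}
    (hK : IsLindelof (toCM '' K)) (i : I) :
    ∃ S : Set I, S.Countable ∧ ∀ f ∈ K,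
      DependsOn (fun x => f x i) S ∧ DependsOn (fun x => f.symm x i) S := by
  have hL := (hK.union hK.image_toCM_symm).image
    (ContinuousMap.continuous_postcomp (ContinuousMap.eval (X := X) i))
  obtain ⟨S, hS, hSL⟩ := hL.exists_countable_dependsOn
  refine ⟨S, hS, fun f hf => ⟨hSL _ ⟨toCM f, Or.inl ⟨f, hf, rfl⟩, rfl⟩, ?_⟩⟩
  exact hSL _ ⟨toCM f.symm, Or.inr ⟨f.symm, ⟨f, hf, rfl⟩, rfl⟩, rfl⟩

section Closure

variable {I : Type u} (D : I → Set I)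

def dependencyClosure (s : Set I) : Set I :=
  ⋃ n : ℕ, (fun t => ⋃ j ∈ t, D j)^[n] s

variable {D}

lemma subset_dependencyClosure (s : Set I) : s ⊆ dependencyClosure D s :=
  subset_iUnion_of_subset 0 subset_rfl

lemma dependencyClosure_countable (hD : ∀ i, (D i).Countable) {s : Set I} (hs : s.Countable) :
    (dependencyClosure D s).Countable := by
  refine countable_iUnion fun n => ?_
  induction n with
  | zero => exact hs
  | succ n ih =>
    rw [iterate_succ_apply']
    exact ih.biUnion fun j _ => hD j

lemma subset_dependencyClosure_of_mem {s : Set I} {j : I} (hj : j ∈ dependencyClosure D s) :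
    D j ⊆ dependencyClosure D s := by
  obtain ⟨n, hn⟩ := mem_iUnion.1 hj
  refine subset_iUnion_of_subset (n + 1) ?_
  rw [iterate_succ_apply']
  exact subset_biUnion_of_mem hn

end Closure

section UnionBelow

variable {I : Type u} (E : I → Ordinal.{u}) (g : I → Set I)

def unionBelow (α : Ordinal.{u}) : Set I :=
  ⋃ (i) (_ : E i < α), g i

variable {E g}

lemma unionBelow_zero : unionBelow E g 0 = ∅ := by
  simp [unionBelow]

lemma subset_unionBelow {i : I} {α : Ordinal.{u}} (hi : E i < α) : g i ⊆ unionBelow E g α :=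
  subset_iUnion₂ (s := fun i (_ : E i < α) => g i) i hi

lemma mem_unionBelow_add_one (hg : ∀ i, i ∈ g i) (i : I) : i ∈ unionBelow E g (E i + 1) :=
  subset_unionBelow (Order.lt_add_one_iff.2 le_rfl) (hg i)

lemma unionBelow_mono : Monotone (unionBelow E g) :=
  fun _ _ hαβ => iUnion₂_mono' fun i hi => ⟨i, hi.trans_le hαβ, subset_rfl⟩

lemma unionBelow_of_isSuccLimit {α : Ordinal.{u}} (hα : Order.IsSuccLimit α) :
    unionBelow E g α = ⋃ γ < α, unionBelow E g γ := by
  refine subset_antisymm (iUnion₂_subset fun i hi => ?_) (iUnion₂_subset fun γ hγ =>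
    unionBelow_mono hγ.le)
  exact subset_iUnion₂_of_subset (E i + 1) (hα.add_one_lt hi)
    (subset_unionBelow (Order.lt_add_one_iff.2 le_rfl))

lemma unionBelow_add_one_diff_countable (hE : Injective E) (hg : ∀ i, (g i).Countable)
    (α : Ordinal.{u}) : (unionBelow E g (α + 1) \ unionBelow E g α).Countable := by
  refine (((subsingleton_singleton (a := α)).preimage hE).countable.biUnion
    fun i _ => hg i).mono ?_
  rintro j ⟨hj, hjα⟩
  obtain ⟨i, hi, hji⟩ := mem_iUnion₂.1 hj
  have hEi : E i = α :=
    (Order.lt_add_one_iff.1 hi).antisymm (not_lt.1 fun h => hjα (subset_unionBelow h hji))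
  exact mem_biUnion hEi hji

lemma subset_unionBelow_of_mem {D : I → Set I} (hg : ∀ i, ∀ j ∈ g i, D j ⊆ g i)
    {α : Ordinal.{u}} {j : I} (hj : j ∈ unionBelow E g α) : D j ⊆ unionBelow E g α := by
  obtain ⟨i, hi, hji⟩ := mem_iUnion₂.1 hj
  exact (hg i j hji).trans (subset_unionBelow hi)

end UnionBelow

section Factor

variable {I : Type u} {X : I → Type u}

lemma proj_apply_eq_of_dependsOn {f : (∀ i, X i) → ∀ i, X i} {A : Set I}
    (hf : ∀ i ∈ A, DependsOn (fun x => f x i) A) {s : (∀ b : A, X b) → ∀ i, X i}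
    (hs : LeftInverse (proj A) s) (x : ∀ i, X i) :
    proj A (f x) = proj A (f (s (proj A x))) :=
  funext fun b => hf b b.2 fun j hj => (congrFun (hs (proj A x)) ⟨j, hj⟩).symm

variable [∀ i, TopologicalSpace (X i)]

lemma continuous_proj_s7 (A : Set I) : Continuous (proj A : (∀ i, X i) → ∀ b : A, X b) :=
  continuous_pi fun b => continuous_apply (b : I)

lemma exists_continuous_leftInverse_proj [∀ i, Nonempty (X i)] (A : Set I) :
    ∃ s : (∀ b : A, X b) → ∀ i, X i, Continuous s ∧ LeftInverse (proj A) s := by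
  classical
  refine ⟨fun u i => if h : i ∈ A then u ⟨i, h⟩ else Classical.arbitrary _,
    continuous_pi fun i => ?_, fun u => funext fun b => dif_pos b.2⟩
  by_cases h : i ∈ A
  · simpa only [dif_pos h] using continuous_apply _
  · simpa only [dif_neg h] using continuous_const

lemma Homeomorph.exists_proj_comm [∀ i, Nonempty (X i)] (f : (∀ i, X i) ≃ₜ (∀ i, X i))
    {A : Set I} (hf : ∀ i ∈ A, DependsOn (fun x => f x i) A)
    (hf' : ∀ i ∈ A, DependsOn (fun x => f.symm x i) A) :
    ∃ fA : (∀ b : A, X b) ≃ₜ (∀ b : A, X b), ∀ x, proj A (f x) = fA (proj A x) := by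
  obtain ⟨s, hsc, hs⟩ := exists_continuous_leftInverse_proj (X := X) A
  refine ⟨{ toFun := fun u => proj A (f (s u))
            invFun := fun u => proj A (f.symm (s u))
            left_inv := fun u => ?_
            right_inv := fun u => ?_
            continuous_toFun := (continuous_proj_s7 A).comp (f.continuous.comp hsc)
            continuous_invFun := (continuous_proj_s7 A).comp (f.symm.continuous.comp hsc) },
    proj_apply_eq_of_dependsOn hf hs⟩
  · simp only
    rw [← proj_apply_eq_of_dependsOn hf' hs, f.symm_apply_apply, hs u]
  · simp only
    rw [← proj_apply_eq_of_dependsOn hf hs, f.apply_symm_apply, hs u]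

end Factor

/-- Proposition 3.1 of the paper: for a Lindelöf set `K` of self-homeomorphisms of a product
`X = ∏ X_i` of nonempty compact metric spaces with `|I| = τ`, the index set can be covered by
an increasing transfinite family `{A(α) : α < ω(τ)}` with countable successive differences
such that every member of `K` factors through each projection `π_{A(α)}`. -/
theorem stmt7 {I : Type u} {X : I → Type u} [∀ i, MetricSpace (X i)]
    [∀ i, CompactSpace (X i)] [∀ i, Nonempty (X i)]
    (τ : Cardinal.{u}) (hτ : Cardinal.aleph0 ≤ τ) (hI : Cardinal.mk I = τ)
    (K : Set ((∀ i, X i) ≃ₜ (∀ i, X i))) (hK : IsLindelof (toCM '' K)) :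
    ∃ 𝒜 : Ordinal.{u} → Set I,
      (∀ i : I, ∃ α < τ.ord, i ∈ 𝒜 α) ∧
      (𝒜 0).Countable ∧
      (∀ α < τ.ord, Order.IsSuccLimit α → 𝒜 α = ⋃ γ < α, 𝒜 γ) ∧
      (∀ α < τ.ord, 𝒜 α ⊆ 𝒜 (α + 1) ∧ (𝒜 (α + 1) \ 𝒜 α).Countable) ∧
      (∀ f ∈ K, ∀ α < τ.ord,
        ∃ fα : (∀ b : 𝒜 α, X b) ≃ₜ (∀ b : 𝒜 α, X b),
          ∀ x : ∀ i, X i, proj (𝒜 α) (f x) = fα (proj (𝒜 α) x)) := by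
  choose D hDc hD using exists_countable_dependsOn_homeomorph_apply hK
  obtain ⟨E, hE, hEτ⟩ : ∃ E : I → Ordinal.{u}, Injective E ∧ ∀ i, E i < τ.ord := by
    obtain ⟨e⟩ : Nonempty (I ≃ Iio τ.ord) := by
      rw [← Cardinal.lift_mk_eq', Cardinal.mk_Iio_ordinal, Cardinal.card_ord, hI]
      simp
    exact ⟨fun i => e i, Subtype.val_injective.comp e.injective, fun i => (e i).2⟩
  have hclosed (α : Ordinal.{u}) :
      ∀ j ∈ unionBelow E (fun i => dependencyClosure D {i}) α,
        D j ⊆ unionBelow E (fun i => dependencyClosure D {i}) α := fun _ hj =>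
    subset_unionBelow_of_mem (fun _ _ hj => subset_dependencyClosure_of_mem hj) hj
  refine ⟨unionBelow E fun i => dependencyClosure D {i}, fun i => ?_, ?_,
    fun α _ hα => unionBelow_of_isSuccLimit hα, fun α _ => ?_, fun f hf α _ => ?_⟩
  · exact ⟨E i + 1, (Cardinal.isSuccLimit_ord hτ).add_one_lt (hEτ i),
      mem_unionBelow_add_one (fun i => subset_dependencyClosure {i} (mem_singleton i)) i⟩
  · simp only [unionBelow_zero, countable_empty]
  · exact ⟨unionBelow_mono (Order.lt_add_one_iff.2 le_rfl).le,
      unionBelow_add_one_diff_countable hE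
        (fun i => dependencyClosure_countable hDc (countable_singleton i)) α⟩
  · exact Homeomorph.exists_proj_comm f (fun j hj => (hD j f hf).1.mono (hclosed α j hj))
      (fun j hj => (hD j f hf).2.mono (hclosed α j hj))
end
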